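/- Let (X_j, Y_j, Z_j), j = 1, ..., n, be i.i.d. triples of random variables with finite alphabets, each distributed according to a pmf p(x,y,z) satisfying the Markov chain Y - X - Z (Y and Z conditionally independent given X). Let T_1 = f_1(Y^n) and T_2 = f_2(Z^n, T_1) for deterministic functions f_1 and f_2. Then for every 1 ≤ i ≤ n, the Markov chain Z^{i-1} - (T_1, T_2, X^{i-1}, Z_i^n) - X_i holds, i.e., Z^{i-1} and X_i are conditionally independent given (T_1, T_2, X^{i-1}, Z_i^n). -/
import Mathlib


open scoped Classical
open Finset

/-- Conditional independence of `A` and `C` given `B` for a pmf `P` on a finite sample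
space, in cross-multiplication form: `P(A=a,B=b,C=c) P(B=b) = P(A=a,B=b) P(B=b,C=c)`. -/
def CondIndepPmf {Ω α β γ : Type*} [Fintype Ω]
    (P : Ω → ℝ) (A : Ω → α) (B : Ω → β) (C : Ω → γ) : Prop :=
  ∀ (a : α) (b : β) (c : γ),
    (∑ ω, if A ω = a ∧ B ω = b ∧ C ω = c then P ω else 0) *
      (∑ ω, if B ω = b then P ω else 0) =
    (∑ ω, if A ω = a ∧ B ω = b then P ω else 0) *
      (∑ ω, if B ω = b ∧ C ω = c then P ω else 0)

section Aux

lemma sum_ite_prod_aux {α β : Type*} [Fintype α] [Fintype β] (g : α × β → ℝ)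
    (P : α → Prop) (Q : β → Prop) :
    ∑ a : α × β, (if P a.1 ∧ Q a.2 then g a else 0)
      = ∑ x, if P x then (∑ y, if Q y then g (x, y) else 0) else 0 := by
  rw [Fintype.sum_prod_type]
  refine Finset.sum_congr rfl fun x _ => ?_
  by_cases h : P x <;> simp [h]

lemma sum_ite_fst_aux {α β : Type*} [Fintype α] [Fintype β] (g : α × β → ℝ)
    (P : α → Prop) :
    ∑ a : α × β, (if P a.1 then g a else 0)
      = ∑ x, if P x then (∑ y, g (x, y)) else 0 := by
  rw [Fintype.sum_prod_type]
  refine Finset.sum_congr rfl fun x _ => ?_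
  by_cases h : P x <;> simp [h]

lemma sum_ite_eq_aux {α : Type*} [Fintype α] (g : α → ℝ) (x0 : α) :
    ∑ x, (if x = x0 then g x else 0) = g x0 := by
  rw [Finset.sum_ite_eq' univ x0 g]; simp

variable {𝒳 𝒴 𝒵 : Type*} [Fintype 𝒳] [Fintype 𝒴] [Fintype 𝒵]

noncomputable def qXm (q : 𝒳 × 𝒴 × 𝒵 → ℝ) (x : 𝒳) : ℝ := ∑ y, ∑ z, q (x, y, z)
noncomputable def qXYm (q : 𝒳 × 𝒴 × 𝒵 → ℝ) (x : 𝒳) (y : 𝒴) : ℝ := ∑ z, q (x, y, z)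
noncomputable def qXZm (q : 𝒳 × 𝒴 × 𝒵 → ℝ) (x : 𝒳) (z : 𝒵) : ℝ := ∑ y, q (x, y, z)

lemma markov_pointwise (q : 𝒳 × 𝒴 × 𝒵 → ℝ)
    (hMarkov : CondIndepPmf q (fun a => a.2.1) (fun a => a.1) (fun a => a.2.2))
    (x : 𝒳) (y : 𝒴) (z : 𝒵) :
    q (x, y, z) * qXm q x = qXYm q x y * qXZm q x z := by
  have h := hMarkov y x z
  have e1 : (∑ a : 𝒳 × 𝒴 × 𝒵, if (fun a => a.2.1) a = y ∧ (fun a => a.1) a = x ∧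
      (fun a => a.2.2) a = z then q a else 0) = q (x, y, z) := by
    have hiff : ∀ a : 𝒳 × 𝒴 × 𝒵, ((fun a : 𝒳 × 𝒴 × 𝒵 => a.2.1) a = y ∧
        (fun a : 𝒳 × 𝒴 × 𝒵 => a.1) a = x ∧ (fun a : 𝒳 × 𝒴 × 𝒵 => a.2.2) a = z)
        ↔ a = (x, y, z) := by
      intro a; constructor
      · rintro ⟨h1, h2, h3⟩; exact Prod.ext h2 (Prod.ext h1 h3)
      · rintro rfl; exact ⟨rfl, rfl, rfl⟩
    refine Eq.trans (Finset.sum_congr rfl fun a _ => ?_) (sum_ite_eq_aux q (x, y, z))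
    split_ifs with h1 h2 h3
    · rfl
    · exact absurd ((hiff a).1 h1) h2
    · exact absurd ((hiff a).2 h3) h1
    · rfl
  have e2 : (∑ a : 𝒳 × 𝒴 × 𝒵, if (fun a => a.1) a = x then q a else 0) = qXm q x := by
    refine Eq.trans (sum_ite_fst_aux q (fun u => u = x)) ?_
    refine Eq.trans (sum_ite_eq_aux (fun u => ∑ p : 𝒴 × 𝒵, q (u, p)) x) ?_
    rw [Fintype.sum_prod_type]; rfl
  have e3 : (∑ a : 𝒳 × 𝒴 × 𝒵, if (fun a => a.2.1) a = y ∧ (fun a => a.1) a = x then q a else 0)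
      = qXYm q x y := by
    have hiff : ∀ a : 𝒳 × 𝒴 × 𝒵, ((fun a : 𝒳 × 𝒴 × 𝒵 => a.2.1) a = y ∧
        (fun a : 𝒳 × 𝒴 × 𝒵 => a.1) a = x) ↔ ((fun u : 𝒳 => u = x) a.1 ∧
          (fun p : 𝒴 × 𝒵 => p.1 = y) a.2) := fun a => and_comm
    refine Eq.trans (Finset.sum_congr rfl fun a _ => ?_)
      (Eq.trans (sum_ite_prod_aux q (fun u => u = x) (fun p => p.1 = y)) ?_)
    · split_ifs with h1 h2 h3
      · rfl
      · exact absurd ((hiff a).1 h1) h2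
      · exact absurd ((hiff a).2 h3) h1
      · rfl
    refine Eq.trans (sum_ite_eq_aux
      (fun u => ∑ p : 𝒴 × 𝒵, if p.1 = y then q (u, p) else 0) x) ?_
    refine Eq.trans (sum_ite_fst_aux (fun p : 𝒴 × 𝒵 => q (x, p)) (fun v => v = y)) ?_
    refine Eq.trans (sum_ite_eq_aux (fun v => ∑ w : 𝒵, q (x, v, w)) y) ?_
    rfl
  have e4 : (∑ a : 𝒳 × 𝒴 × 𝒵, if (fun a => a.1) a = x ∧ (fun a => a.2.2) a = z then q a else 0)
      = qXZm q x z := by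
    refine Eq.trans (sum_ite_prod_aux q (fun u => u = x) (fun p => p.2 = z)) ?_
    refine Eq.trans (sum_ite_eq_aux
      (fun u => ∑ p : 𝒴 × 𝒵, if p.2 = z then q (u, p) else 0) x) ?_
    rw [Fintype.sum_prod_type_right]
    refine Eq.trans (Finset.sum_congr rfl fun w _ => ?_)
      (sum_ite_eq_aux (fun w => ∑ v : 𝒴, q (x, v, w)) z)
    by_cases h : w = z <;> simp [h]
  rw [e1, e2, e3, e4] at h
  exact h

lemma qzero (q : 𝒳 × 𝒴 × 𝒵 → ℝ) (hq0 : ∀ a, 0 ≤ q a) {x : 𝒳} (hx : qXm q x = 0)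
    (y : 𝒴) (z : 𝒵) : q (x, y, z) = 0 := by
  have h1 : ∀ y' ∈ (univ : Finset 𝒴), 0 ≤ ∑ z', q (x, y', z') :=
    fun y' _ => Finset.sum_nonneg fun z' _ => hq0 _
  have h2 := (Finset.sum_eq_zero_iff_of_nonneg h1).1 hx y (mem_univ _)
  have h3 : ∀ z' ∈ (univ : Finset 𝒵), 0 ≤ q (x, y, z') := fun z' _ => hq0 _
  exact (Finset.sum_eq_zero_iff_of_nonneg h3).1 h2 z (mem_univ _)

variable {τ₁ : Type*} {n : ℕ}

noncomputable def Mfun (q : 𝒳 × 𝒴 × 𝒵 → ℝ) (f1 : (Fin n → 𝒴) → τ₁) (t1 : τ₁)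
    (x : Fin n → 𝒳) (z : Fin n → 𝒵) : ℝ :=
  ∑ y : Fin n → 𝒴, if f1 y = t1 then ∏ j, q (x j, y j, z j) else 0

noncomputable def Nfun (q : 𝒳 × 𝒴 × 𝒵 → ℝ) (f1 : (Fin n → 𝒴) → τ₁) (t1 : τ₁)
    (x : Fin n → 𝒳) : ℝ :=
  ∑ y : Fin n → 𝒴, if f1 y = t1 then ∏ j, qXYm q (x j) (y j) else 0

lemma M_mul_QX (q : 𝒳 × 𝒴 × 𝒵 → ℝ)
    (hMarkov : CondIndepPmf q (fun a => a.2.1) (fun a => a.1) (fun a => a.2.2))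
    (f1 : (Fin n → 𝒴) → τ₁) (t1 : τ₁) (x : Fin n → 𝒳) (z : Fin n → 𝒵) :
    Mfun q f1 t1 x z * (∏ j, qXm q (x j))
      = Nfun q f1 t1 x * ∏ j, qXZm q (x j) (z j) := by
  unfold Mfun Nfun
  rw [Finset.sum_mul, Finset.sum_mul]
  refine Finset.sum_congr rfl fun y _ => ?_
  by_cases h : f1 y = t1
  · rw [if_pos h, if_pos h, ← Finset.prod_mul_distrib, ← Finset.prod_mul_distrib]
    exact Finset.prod_congr rfl fun j _ => markov_pointwise q hMarkov (x j) (y j) (z j)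
  · rw [if_neg h, if_neg h, zero_mul, zero_mul]

lemma M_zero (q : 𝒳 × 𝒴 × 𝒵 → ℝ) (hq0 : ∀ a, 0 ≤ q a)
    (f1 : (Fin n → 𝒴) → τ₁) (t1 : τ₁) {x : Fin n → 𝒳} (j0 : Fin n)
    (h0 : qXm q (x j0) = 0) (z : Fin n → 𝒵) : Mfun q f1 t1 x z = 0 := by
  refine Finset.sum_eq_zero fun y _ => ?_
  split_ifs with h
  · exact Finset.prod_eq_zero (mem_univ j0) (qzero q hq0 h0 _ _)
  · rfl

lemma M_swap (q : 𝒳 × 𝒴 × 𝒵 → ℝ) (hq0 : ∀ a, 0 ≤ q a)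
    (hMarkov : CondIndepPmf q (fun a => a.2.1) (fun a => a.1) (fun a => a.2.2))
    (f1 : (Fin n → 𝒴) → τ₁) (t1 : τ₁) (i : Fin n)
    {x x' : Fin n → 𝒳} {z z' : Fin n → 𝒵}
    (hxx' : ∀ j : Fin n, j < i → x j = x' j)
    (hzz' : ∀ j : Fin n, i ≤ j → z j = z' j) :
    Mfun q f1 t1 x z * Mfun q f1 t1 x' z'
      = Mfun q f1 t1 x z' * Mfun q f1 t1 x' z := by
  by_cases hx : ∀ j, qXm q (x j) ≠ 0
  · by_cases hx' : ∀ j, qXm q (x' j) ≠ 0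
    · have hQx : (∏ j, qXm q (x j)) ≠ 0 := Finset.prod_ne_zero_iff.2 fun j _ => hx j
      have hQx' : (∏ j, qXm q (x' j)) ≠ 0 := Finset.prod_ne_zero_iff.2 fun j _ => hx' j
      apply mul_right_cancel₀ (mul_ne_zero hQx hQx')
      have hswap : (∏ j, qXZm q (x j) (z j)) * (∏ j, qXZm q (x' j) (z' j))
          = (∏ j, qXZm q (x j) (z' j)) * (∏ j, qXZm q (x' j) (z j)) := by
        have split : ∀ (u : Fin n → 𝒳) (v : Fin n → 𝒵),
            (∏ j, qXZm q (u j) (v j))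
              = (∏ j ∈ univ.filter fun j => j < i, qXZm q (u j) (v j)) *
                ∏ j ∈ univ.filter fun j => ¬ j < i, qXZm q (u j) (v j) :=
          fun u v => (Finset.prod_filter_mul_prod_filter_not univ _ _).symm
        rw [split x z, split x' z', split x z', split x' z]
        have eL : ∀ v : Fin n → 𝒵,
            (∏ j ∈ univ.filter fun j => j < i, qXZm q (x' j) (v j))
              = ∏ j ∈ univ.filter fun j => j < i, qXZm q (x j) (v j) :=
          fun v => Finset.prod_congr rfl fun j hj => by
            rw [← hxx' j (by simpa using hj)]
        have eH : ∀ u : Fin n → 𝒳,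
            (∏ j ∈ univ.filter fun j => ¬ j < i, qXZm q (u j) (z' j))
              = ∏ j ∈ univ.filter fun j => ¬ j < i, qXZm q (u j) (z j) :=
          fun u => Finset.prod_congr rfl fun j hj => by
            rw [← hzz' j (le_of_not_gt (by simpa using hj))]
        rw [eL z, eL z', eH x, eH x']
        ring
      calc Mfun q f1 t1 x z * Mfun q f1 t1 x' z' * ((∏ j, qXm q (x j)) * ∏ j, qXm q (x' j))
          = (Mfun q f1 t1 x z * ∏ j, qXm q (x j)) *
            (Mfun q f1 t1 x' z' * ∏ j, qXm q (x' j)) := by ring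
        _ = (Nfun q f1 t1 x * ∏ j, qXZm q (x j) (z j)) *
            (Nfun q f1 t1 x' * ∏ j, qXZm q (x' j) (z' j)) := by
            rw [M_mul_QX q hMarkov, M_mul_QX q hMarkov]
        _ = (Nfun q f1 t1 x * Nfun q f1 t1 x') *
            ((∏ j, qXZm q (x j) (z j)) * ∏ j, qXZm q (x' j) (z' j)) := by ring
        _ = (Nfun q f1 t1 x * Nfun q f1 t1 x') *
            ((∏ j, qXZm q (x j) (z' j)) * ∏ j, qXZm q (x' j) (z j)) := by rw [hswap]
        _ = (Nfun q f1 t1 x * ∏ j, qXZm q (x j) (z' j)) *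
            (Nfun q f1 t1 x' * ∏ j, qXZm q (x' j) (z j)) := by ring
        _ = (Mfun q f1 t1 x z' * ∏ j, qXm q (x j)) *
            (Mfun q f1 t1 x' z * ∏ j, qXm q (x' j)) := by
            rw [M_mul_QX q hMarkov, M_mul_QX q hMarkov]
        _ = Mfun q f1 t1 x z' * Mfun q f1 t1 x' z *
            ((∏ j, qXm q (x j)) * ∏ j, qXm q (x' j)) := by ring
    · push_neg at hx'
      obtain ⟨j0, hj0⟩ := hx'
      rw [M_zero q hq0 f1 t1 j0 hj0 z', M_zero q hq0 f1 t1 j0 hj0 z, mul_zero, mul_zero]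
  · push_neg at hx
    obtain ⟨j0, hj0⟩ := hx
    rw [M_zero q hq0 f1 t1 j0 hj0 z, M_zero q hq0 f1 t1 j0 hj0 z', zero_mul, zero_mul]

lemma sum_over_omega (q : 𝒳 × 𝒴 × 𝒵 → ℝ) (f1 : (Fin n → 𝒴) → τ₁) (t1 : τ₁)
    (C : (Fin n → 𝒳) → (Fin n → 𝒵) → Prop) :
    (∑ ω : (Fin n → 𝒳) × (Fin n → 𝒴) × (Fin n → 𝒵),
        if f1 ω.2.1 = t1 ∧ C ω.1 ω.2.2 then ∏ j, q (ω.1 j, ω.2.1 j, ω.2.2 j) else 0)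
      = ∑ x, ∑ z, if C x z then Mfun q f1 t1 x z else 0 := by
  rw [Fintype.sum_prod_type]
  refine Finset.sum_congr rfl fun x _ => ?_
  rw [Fintype.sum_prod_type_right]
  refine Finset.sum_congr rfl fun z _ => ?_
  by_cases h : C x z <;> simp [h, Mfun]

lemma swap_trick {X Z : Type*} [Fintype X] [Fintype Z]
    (G : X → Z → ℝ) (A : Z → ℝ) (C : X → ℝ)
    (hG : ∀ x x' z z', G x z * G x' z' = G x z' * G x' z) :
    (∑ x, ∑ z, A z * C x * G x z) * (∑ x, ∑ z, G x z)
      = (∑ x, ∑ z, A z * G x z) * (∑ x, ∑ z, C x * G x z) := by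
  have expand : ∀ (F H : X → Z → ℝ),
      (∑ x, ∑ z, F x z) * (∑ x, ∑ z, H x z)
        = ∑ x, ∑ x', ∑ z, ∑ z', F x z * H x' z' := by
    intro F H
    rw [Finset.sum_mul_sum]
    refine Finset.sum_congr rfl fun x _ => Finset.sum_congr rfl fun x' _ => ?_
    rw [Finset.sum_mul_sum]
  calc (∑ x, ∑ z, A z * C x * G x z) * (∑ x, ∑ z, G x z)
      = ∑ x, ∑ x', ∑ z, ∑ z', A z * C x * G x z * G x' z' := expand _ _
    _ = ∑ x, ∑ x', ∑ z, ∑ z', A z * C x * (G x z' * G x' z) := by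
        refine Finset.sum_congr rfl fun x _ => Finset.sum_congr rfl fun x' _ =>
          Finset.sum_congr rfl fun zz _ => Finset.sum_congr rfl fun zz' _ => ?_
        rw [mul_assoc, hG x x' zz zz']
    _ = ∑ x', ∑ x, ∑ z, ∑ z', A z * C x * (G x z' * G x' z) := Finset.sum_comm
    _ = ∑ x, ∑ x', ∑ z, ∑ z', (A z * G x z) * (C x' * G x' z') := by
        refine Finset.sum_congr rfl fun x _ => Finset.sum_congr rfl fun x' _ =>
          Finset.sum_congr rfl fun zz _ => Finset.sum_congr rfl fun zz' _ => ?_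
        ring
    _ = (∑ x, ∑ z, A z * G x z) * (∑ x, ∑ z, C x * G x z) := (expand _ _).symm

end Aux

/-- For i.i.d. triples `(X_j,Y_j,Z_j) ~ q` with the single-letter Markov chain `Y - X - Z`, `T₁ = f₁(Yⁿ)` and `T₂ = f₂(Zⁿ, T₁)`, the Markov chain `Z^{i-1} - (T₁, T₂, X^{i-1}, Z_iⁿ) - X_i` holds. -/
theorem markov_stmt14
    {𝒳 𝒴 𝒵 : Type*} [Fintype 𝒳] [Fintype 𝒴] [Fintype 𝒵] {n : ℕ}
    (q : 𝒳 × 𝒴 × 𝒵 → ℝ) (hq0 : ∀ a, 0 ≤ q a) (hq1 : ∑ a, q a = 1)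
    (hMarkov : CondIndepPmf q (fun a => a.2.1) (fun a => a.1) (fun a => a.2.2))
    {τ₁ τ₂ : Type*}
    (f1 : (Fin n → 𝒴) → τ₁) (f2 : (Fin n → 𝒵) → τ₁ → τ₂)
    (i : Fin n) :
    CondIndepPmf
      (fun ω : (Fin n → 𝒳) × (Fin n → 𝒴) × (Fin n → 𝒵) =>
        ∏ j, q (ω.1 j, ω.2.1 j, ω.2.2 j))
      (fun ω => (fun j : {j : Fin n // j < i} => ω.2.2 j))
      (fun ω => (f1 ω.2.1, f2 ω.2.2 (f1 ω.2.1), (fun j : {j : Fin n // j < i} => ω.1 j), (fun j : {j : Fin n // i ≤ j} => ω.2.2 j)))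
      (fun ω => ω.1 i) := by
  intro a b c
  obtain ⟨t1, t2, xa, zb⟩ := b
  set Px : (Fin n → 𝒳) → Prop := fun x => (fun j : {j : Fin n // j < i} => x j) = xa with hPx
  clear_value Px
  set Pz : (Fin n → 𝒵) → Prop :=
    fun z => f2 z t1 = t2 ∧ (fun j : {j : Fin n // i ≤ j} => z j) = zb with hPz
  clear_value Pz
  set PA : (Fin n → 𝒵) → Prop := fun z => (fun j : {j : Fin n // j < i} => z j) = a with hPA
  clear_value PA
  set G : (Fin n → 𝒳) → (Fin n → 𝒵) → ℝ :=
    fun x z => if Px x ∧ Pz z then Mfun q f1 t1 x z else 0 with hG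
  clear_value G
  set IA : (Fin n → 𝒵) → ℝ := fun z => if PA z then (1:ℝ) else 0 with hIA
  clear_value IA
  set IC : (Fin n → 𝒳) → ℝ := fun x => if x i = c then (1:ℝ) else 0 with hIC
  clear_value IC
  have hGswap : ∀ x x' z z', G x z * G x' z' = G x z' * G x' z := by
    intro x x' z z'
    by_cases h1 : Px x
    · by_cases h2 : Px x'
      · by_cases h3 : Pz z
        · by_cases h4 : Pz z'
          · simp only [hG]
            rw [if_pos (⟨h1, h3⟩ : Px x ∧ Pz z), if_pos (⟨h2, h4⟩ : Px x' ∧ Pz z'),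
              if_pos (⟨h1, h4⟩ : Px x ∧ Pz z'), if_pos (⟨h2, h3⟩ : Px x' ∧ Pz z)]
            rw [hPx] at h1 h2
            rw [hPz] at h3 h4
            refine M_swap q hq0 hMarkov f1 t1 i ?_ ?_
            · intro j hj
              have e1 := congrFun h1 ⟨j, hj⟩
              have e2 := congrFun h2 ⟨j, hj⟩
              simp only at e1 e2
              rw [e1, e2]
            · intro j hj
              have e1 := congrFun h3.2 ⟨j, hj⟩
              have e2 := congrFun h4.2 ⟨j, hj⟩
              simp only at e1 e2
              rw [e1, e2]
          · simp [hG, h4]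
        · simp [hG, h3]
      · simp [hG, h2]
    · simp [hG, h1]
  have hiffB : ∀ ω : (Fin n → 𝒳) × (Fin n → 𝒴) × (Fin n → 𝒵),
      ((f1 ω.2.1, f2 ω.2.2 (f1 ω.2.1), (fun j : {j : Fin n // j < i} => ω.1 j),
          (fun j : {j : Fin n // i ≤ j} => ω.2.2 j)) = (t1, t2, xa, zb))
      ↔ (f1 ω.2.1 = t1 ∧ (Px ω.1 ∧ Pz ω.2.2)) := by
    intro ω
    simp only [hPx, hPz, Prod.mk.injEq]
    constructor
    · rintro ⟨e1, e2, e3, e4⟩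
      exact ⟨e1, e3, by rw [← e1]; exact e2, e4⟩
    · rintro ⟨e1, e3, e2, e4⟩
      exact ⟨e1, by rw [e1]; exact e2, e3, e4⟩
  refine Eq.trans (congrArg₂ (fun r s : ℝ => r * s) ?eABC ?eB)
    (Eq.trans (swap_trick G IA IC hGswap)
      (congrArg₂ (fun r s : ℝ => r * s) ?eAB ?eBC).symm)
  case eABC =>
    refine Eq.trans (Finset.sum_congr rfl fun ω _ => ?_)
      (Eq.trans (sum_over_omega q f1 t1 (fun x z => PA z ∧ x i = c ∧ (Px x ∧ Pz z))) ?_)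
    · have hiff : ((fun j : {j : Fin n // j < i} => ω.2.2 j) = a ∧
          (f1 ω.2.1, f2 ω.2.2 (f1 ω.2.1), (fun j : {j : Fin n // j < i} => ω.1 j),
            (fun j : {j : Fin n // i ≤ j} => ω.2.2 j)) = (t1, t2, xa, zb) ∧ ω.1 i = c)
          ↔ (f1 ω.2.1 = t1 ∧ (PA ω.2.2 ∧ ω.1 i = c ∧ (Px ω.1 ∧ Pz ω.2.2))) := by
        rw [hiffB ω]
        simp only [hPA]
        tauto
      split_ifs with h1 h2 h3
      · rfl
      · exact absurd (hiff.1 h1) h2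
      · exact absurd (hiff.2 h3) h1
      · rfl
    · refine Finset.sum_congr rfl fun x _ => Finset.sum_congr rfl fun z _ => ?_
      by_cases hA : PA z <;> by_cases hC : x i = c <;> by_cases hB : Px x ∧ Pz z <;>
        simp [hA, hC, hB, hG, hIA, hIC]
  case eB =>
    refine Eq.trans (Finset.sum_congr rfl fun ω _ => ?_)
      (Eq.trans (sum_over_omega q f1 t1 (fun x z => Px x ∧ Pz z)) ?_)
    swap
    · refine Finset.sum_congr rfl fun x _ => Finset.sum_congr rfl fun z _ => ?_
      simp only [hG]
      split_ifs <;> rfl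
    split_ifs with h1 h2 h3
    · rfl
    · exact absurd ((hiffB ω).1 h1) h2
    · exact absurd ((hiffB ω).2 h3) h1
    · rfl
  case eAB =>
    refine Eq.trans (Finset.sum_congr rfl fun ω _ => ?_)
      (Eq.trans (sum_over_omega q f1 t1 (fun x z => PA z ∧ (Px x ∧ Pz z))) ?_)
    · have hiff : ((fun j : {j : Fin n // j < i} => ω.2.2 j) = a ∧
          (f1 ω.2.1, f2 ω.2.2 (f1 ω.2.1), (fun j : {j : Fin n // j < i} => ω.1 j),
            (fun j : {j : Fin n // i ≤ j} => ω.2.2 j)) = (t1, t2, xa, zb))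
          ↔ (f1 ω.2.1 = t1 ∧ (PA ω.2.2 ∧ (Px ω.1 ∧ Pz ω.2.2))) := by
        rw [hiffB ω]
        simp only [hPA]
        tauto
      split_ifs with h1 h2 h3
      · rfl
      · exact absurd (hiff.1 h1) h2
      · exact absurd (hiff.2 h3) h1
      · rfl
    · refine Finset.sum_congr rfl fun x _ => Finset.sum_congr rfl fun z _ => ?_
      by_cases hA : PA z <;> by_cases hB : Px x ∧ Pz z <;> simp [hA, hB, hG, hIA]
  case eBC =>
    refine Eq.trans (Finset.sum_congr rfl fun ω _ => ?_)
      (Eq.trans (sum_over_omega q f1 t1 (fun x z => x i = c ∧ (Px x ∧ Pz z))) ?_)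
    · have hiff : ((f1 ω.2.1, f2 ω.2.2 (f1 ω.2.1), (fun j : {j : Fin n // j < i} => ω.1 j),
            (fun j : {j : Fin n // i ≤ j} => ω.2.2 j)) = (t1, t2, xa, zb) ∧ ω.1 i = c)
          ↔ (f1 ω.2.1 = t1 ∧ (ω.1 i = c ∧ (Px ω.1 ∧ Pz ω.2.2))) := by
        rw [and_congr_left_iff.2 (fun _ => hiffB ω)]
        tauto
      split_ifs with h1 h2 h3
      · rfl
      · exact absurd (hiff.1 h1) h2
      · exact absurd (hiff.2 h3) h1
      · rfl
    · refine Finset.sum_congr rfl fun x _ => Finset.sum_congr rfl fun z _ => ?_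
      by_cases hC : x i = c <;> by_cases hB : Px x ∧ Pz z <;> simp [hC, hB, hG, hIC]
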